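/- Let 0 < a < 1 and let b be a natural number with a·b ≥ 1. The Weierstrass fractal kernel W(x,y) = ∑_{n=0}^∞ aⁿ cos(bⁿ π (x−y)) is positive definite on [−1,1]: for every m ≥ 1, every choice of points x_1, …, x_m ∈ [−1,1] and real numbers c_1, …, c_m, one has ∑_{i=1}^m ∑_{j=1}^m c_i c_j W(x_i, x_j) ≥ 0. -/

import Mathlib

open Real

/-- The Weierstrass fractal kernel `W(x,y) = ∑ₙ aⁿ cos(bⁿ π (x - y))`. -/
noncomputable def weierstrassKernel (a : ℝ) (b : ℕ) (x y : ℝ) : ℝ :=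
  ∑' n : ℕ, a ^ n * Real.cos ((b : ℝ) ^ n * π * (x - y))

/-
Each term `aⁿ cos(bⁿπ(x - y))` is a positive semidefinite kernel, since `cos (u - v)` is the
inner product of the unit vectors `(cos u, sin u)` and `(cos v, sin v)`; a convergent series of
positive semidefinite kernels with nonnegative weights is again positive semidefinite.
-/

open Finset

theorem summable_pow_mul_cos {a : ℝ} (ha : |a| < 1) (t : ℕ → ℝ) :
    Summable fun n => a ^ n * cos (t n) :=
  Summable.of_norm_bounded (summable_geometric_of_lt_one (abs_nonneg a) ha) fun n => by
    rw [norm_mul, norm_pow, Real.norm_eq_abs]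
    exact mul_le_of_le_one_right (by positivity) (abs_cos_le_one _)

section Kernel

variable {ι : Type*} [Fintype ι]

theorem sum_sum_mul_cos_sub_eq (c u : ι → ℝ) :
    ∑ i, ∑ j, c i * c j * cos (u i - u j) =
      (∑ i, c i * cos (u i)) ^ 2 + (∑ i, c i * sin (u i)) ^ 2 := by
  simp only [sq, sum_mul_sum, ← sum_add_distrib, cos_sub]
  exact sum_congr rfl fun i _ => sum_congr rfl fun j _ => by ring

theorem sum_sum_mul_cos_sub_nonneg (c u : ι → ℝ) :
    0 ≤ ∑ i, ∑ j, c i * c j * cos (u i - u j) := by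
  rw [sum_sum_mul_cos_sub_eq]
  positivity

theorem sum_sum_mul_tsum_nonneg {K : ℕ → ι → ι → ℝ} (hK : ∀ i j, Summable fun n => K n i j)
    (c : ι → ℝ) (hpos : ∀ n, 0 ≤ ∑ i, ∑ j, c i * c j * K n i j) :
    0 ≤ ∑ i, ∑ j, c i * c j * ∑' n, K n i j := by
  have hcK : ∀ i j, Summable fun n => c i * c j * K n i j := fun i j => (hK i j).mul_left _
  simp_rw [← tsum_mul_left]
  rw [sum_congr rfl fun i _ => (Summable.tsum_finsetSum fun j _ => hcK i j).symm,
    ← Summable.tsum_finsetSum fun i _ => summable_sum fun j _ => hcK i j]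
  exact tsum_nonneg hpos

end Kernel

theorem weierstrassKernel_posDef
    (a : ℝ) (b : ℕ) (ha0 : 0 < a) (ha1 : a < 1)
    (m : ℕ) (x : Fin m → ℝ)
    (c : Fin m → ℝ) :
    0 ≤ ∑ i : Fin m, ∑ j : Fin m, c i * c j * weierstrassKernel a b (x i) (x j) := by
  have ha : |a| < 1 := abs_lt.mpr ⟨by linarith, ha1⟩
  refine sum_sum_mul_tsum_nonneg (fun i j => summable_pow_mul_cos ha _) c fun n => ?_
  have hsub : ∀ i j, (b : ℝ) ^ n * π * (x i - x j) = b ^ n * π * x i - b ^ n * π * x j :=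
    fun i j => mul_sub _ _ _
  simp_rw [hsub, mul_left_comm _ (a ^ n), ← mul_sum]
  exact mul_nonneg (pow_nonneg ha0.le n) (sum_sum_mul_cos_sub_nonneg c _)
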